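/- Let φ and α be CTL formulas and q an atom with q ∉ Var(φ) ∪ Var(α). If ψ is a result of forgetting {q} from φ ∧ (q ↔ α), then ψ ≡ φ. -/

import Mathlib

universe u

/-- A Kripke structure over a set of atoms: a finite nonempty set of states,
a serial transition relation, and a labeling function. -/
structure Kripke (Atom : Type u) where
  State : Type u
  stateFinite : Finite State
  stateNonempty : Nonempty State
  R : State → State → Prop
  serial : ∀ s, ∃ t, R s t
  L : State → Set Atom

instance {Atom : Type u} (M : Kripke Atom) : Finite M.State := M.stateFinite

/-- A K-structure: a Kripke structure together with one of its states. -/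
structure KStruct (Atom : Type u) where
  M : Kripke Atom
  s : M.State

/-- An initial structure: a Kripke structure with an initial state `s0`,
i.e. a state admitting a path visiting every state. -/
structure InitKripke (Atom : Type u) extends Kripke Atom where
  s0 : State
  initial : ∃ π : ℕ → State, π 0 = s0 ∧ (∀ n, R (π n) (π (n + 1))) ∧ ∀ t, ∃ n, π n = t

/-- The (initial) K-structure associated to an initial structure. -/
def InitKripke.toKS {Atom : Type u} (M : InitKripke Atom) : KStruct Atom :=
  ⟨M.toKripke, M.s0⟩

/-- The approximations `B_n^V` of `V`-bisimilarity on K-structures. -/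
def BRel {Atom : Type u} (V : Set Atom) : ℕ → KStruct Atom → KStruct Atom → Prop
  | 0 => fun K1 K2 => K1.M.L K1.s \ V = K2.M.L K2.s \ V
  | n + 1 => fun K1 K2 =>
      K1.M.L K1.s \ V = K2.M.L K2.s \ V ∧
      (∀ t1, K1.M.R K1.s t1 → ∃ t2, K2.M.R K2.s t2 ∧ BRel V n ⟨K1.M, t1⟩ ⟨K2.M, t2⟩) ∧
      (∀ t2, K2.M.R K2.s t2 → ∃ t1, K1.M.R K1.s t1 ∧ BRel V n ⟨K1.M, t1⟩ ⟨K2.M, t2⟩)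

/-- `V`-bisimilarity `K1 ↔_V K2` of K-structures. -/
def VBisim {Atom : Type u} (V : Set Atom) (K1 K2 : KStruct Atom) : Prop :=
  ∀ n, BRel V n K1 K2

/-- CTL formulas in existential normal form. -/
inductive CTL (Atom : Type u) : Type u
  | bot  : CTL Atom
  | top  : CTL Atom
  | atom (p : Atom) : CTL Atom
  | neg  (φ : CTL Atom) : CTL Atom
  | or   (φ ψ : CTL Atom) : CTL Atom
  | EX   (φ : CTL Atom) : CTL Atom
  | EG   (φ : CTL Atom) : CTL Atom
  | EU   (φ ψ : CTL Atom) : CTL Atom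

namespace CTL
variable {Atom : Type u}

def and (φ ψ : CTL Atom) : CTL Atom := .neg (.or (.neg φ) (.neg ψ))
def imp (φ ψ : CTL Atom) : CTL Atom := .or (.neg φ) ψ
def iff (φ ψ : CTL Atom) : CTL Atom := (φ.imp ψ).and (ψ.imp φ)
def AX (φ : CTL Atom) : CTL Atom := .neg (.EX (.neg φ))
def EF (φ : CTL Atom) : CTL Atom := .EU .top φ
def AF (φ : CTL Atom) : CTL Atom := .neg (.EG (.neg φ))
def AG (φ : CTL Atom) : CTL Atom := .neg (.EU .top (.neg φ))

/-- The set of atoms occurring in a formula. -/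
def vars : CTL Atom → Set Atom
  | .bot => ∅
  | .top => ∅
  | .atom p => {p}
  | .neg φ => vars φ
  | .or φ ψ => vars φ ∪ vars ψ
  | .EX φ => vars φ
  | .EG φ => vars φ
  | .EU φ ψ => vars φ ∪ vars ψ

end CTL

/-- The standard CTL satisfaction relation `(M,s) ⊨ φ`. -/
def Sat {Atom : Type u} (M : Kripke Atom) : CTL Atom → M.State → Prop
  | .bot => fun _ => False
  | .top => fun _ => True
  | .atom p => fun s => p ∈ M.L s
  | .neg φ => fun s => ¬ Sat M φ s
  | .or φ ψ => fun s => Sat M φ s ∨ Sat M ψ s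
  | .EX φ => fun s => ∃ t, M.R s t ∧ Sat M φ t
  | .EG φ => fun s => ∃ π : ℕ → M.State, π 0 = s ∧ (∀ n, M.R (π n) (π (n + 1))) ∧
      ∀ n, Sat M φ (π n)
  | .EU φ ψ => fun s => ∃ π : ℕ → M.State, π 0 = s ∧ (∀ n, M.R (π n) (π (n + 1))) ∧
      ∃ i, Sat M ψ (π i) ∧ ∀ j < i, Sat M φ (π j)

/-- Satisfaction for K-structures. -/
def KSat {Atom : Type u} (K : KStruct Atom) (φ : CTL Atom) : Prop := Sat K.M φ K.s

/-- The set of models (initial K-structures) of a formula. -/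
def CTLMod {Atom : Type u} (φ : CTL Atom) : Set (InitKripke Atom) :=
  {M | Sat M.toKripke φ M.s0}

def Entails {Atom : Type u} (φ ψ : CTL Atom) : Prop := CTLMod φ ⊆ CTLMod ψ

def CTLEquiv {Atom : Type u} (φ ψ : CTL Atom) : Prop := CTLMod φ = CTLMod ψ

/-- `IR φ V`: φ is irrelevant to the atoms in V. -/
def IR {Atom : Type u} (φ : CTL Atom) (V : Set Atom) : Prop :=
  ∃ ψ : CTL Atom, CTL.vars ψ ∩ V = ∅ ∧ CTLEquiv φ ψ

/-- `V`-bisimilarity of depth-`n` computation trees rooted at `s1` (in `M1`) and `s2` (in `M2`). -/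
def TreeBisim {Atom : Type u} (V : Set Atom) (M1 M2 : Kripke Atom) :
    ℕ → M1.State → M2.State → Prop
  | 0 => fun s1 s2 => M1.L s1 \ V = M2.L s2 \ V
  | n + 1 => fun s1 s2 =>
      M1.L s1 \ V = M2.L s2 \ V ∧
      (∀ t1, M1.R s1 t1 → ∃ t2, M2.R s2 t2 ∧ TreeBisim V M1 M2 n t1 t2) ∧
      (∀ t2, M2.R s2 t2 → ∃ t1, M1.R s1 t1 ∧ TreeBisim V M1 M2 n t1 t2)

/-- Finite conjunction of a list of formulas. -/
def andList {Atom : Type u} : List (CTL Atom) → CTL Atom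
  | [] => .top
  | φ :: l => φ.and (andList l)

/-- Finite disjunction of a list of formulas. -/
def orList {Atom : Type u} : List (CTL Atom) → CTL Atom
  | [] => .bot
  | φ :: l => .or φ (orList l)

/-- A list enumerating a subset of a finite type. -/
noncomputable def setToList {α : Type u} [Finite α] (s : Set α) : List α :=
  s.toFinite.toFinset.toList

/-- The list of `R`-successors of a state. -/
noncomputable def Kripke.succList {Atom : Type u} (M : Kripke Atom) (s : M.State) :
    List M.State :=
  setToList {t | M.R s t}

/-- The characterizing formula `F_V(Tr_0(s))` of the depth-0 computation tree. -/
noncomputable def charTree0 {Atom : Type u} [Finite Atom] (M : Kripke Atom) (V : Set Atom)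
    (s : M.State) : CTL Atom :=
  (andList ((setToList (V ∩ M.L s)).map CTL.atom)).and
    (andList ((setToList (V \ M.L s)).map fun q => CTL.neg (CTL.atom q)))

/-- The characterizing formula `F_V(Tr_n(s))` of the depth-`n` computation tree of `s`. -/
noncomputable def charTree {Atom : Type u} [Finite Atom] (M : Kripke Atom) (V : Set Atom) :
    ℕ → M.State → CTL Atom
  | 0 => fun s => charTree0 M V s
  | k + 1 => fun s =>
      (andList ((M.succList s).map fun t => CTL.EX (charTree M V k t))).and
        ((CTL.AX (orList ((M.succList s).map (charTree M V k)))).and (charTree0 M V s))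

/-- `dis_V(M,s,s',k)`: `s` and `s'` are `V`-distinguishable, and `k` is the least depth at which
their computation trees fail to be `(𝒜∖V)`-bisimilar. -/
def dis {Atom : Type u} (M : Kripke Atom) (V : Set Atom) (s s' : M.State) (k : ℕ) : Prop :=
  ¬ VBisim Vᶜ ⟨M, s⟩ ⟨M, s'⟩ ∧
  IsLeast {n | ¬ TreeBisim Vᶜ M M n s s'} k

/-- The characterization number `ch(M,V)`. -/
noncomputable def ch {Atom : Type u} (M : Kripke Atom) (V : Set Atom) : ℕ :=
  letI := Classical.dec (∃ s s' k, dis M V s s' k)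
  if ∃ s s' k, dis M V s s' k then
    sSup {k | ∃ s s', dis M V s s' k}
  else
    sInf {k | (fun s s' : M.State => BRel Vᶜ k ⟨M, s⟩ ⟨M, s'⟩) =
              (fun s s' : M.State => BRel Vᶜ (k + 1) ⟨M, s⟩ ⟨M, s'⟩)}

/-- The characterizing formula `F_V(M,s0)` of an initial K-structure on `V`. -/
noncomputable def charForm {Atom : Type u} [Finite Atom] (M : InitKripke Atom) (V : Set Atom) :
    CTL Atom :=
  let T : M.State → CTL Atom := fun s => charTree M.toKripke V (ch M.toKripke V) s
  (T M.s0).and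
    (andList ((setToList (Set.univ : Set M.State)).map fun s =>
      CTL.AG ((T s).imp
        ((andList ((M.toKripke.succList s).map fun t => CTL.EX (T t))).and
          (CTL.AX (orList ((M.toKripke.succList s).map T)))))))

/-- `ψ` is a result of forgetting `V` from `φ`. -/
def IsForget {Atom : Type u} (φ : CTL Atom) (V : Set Atom) (ψ : CTL Atom) : Prop :=
  CTL.vars ψ ∩ V = ∅ ∧
  CTLMod ψ = {K : InitKripke Atom | ∃ K' ∈ CTLMod φ, VBisim V K'.toKS K.toKS}

/-!
A model of `ψ` is `{q}`-bisimilar to a model of `φ ∧ (q ↔ α)`, and `φ`, which does not mention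
`q`, is invariant under `{q}`-bisimulation. Conversely, relabelling a model of `φ` so that `q` holds
exactly where `α` does yields a `{q}`-bisimilar structure in which `φ` and `α` keep their truth
values, hence a model of `φ ∧ (q ↔ α)`; so the original model satisfies `ψ`.
-/

namespace BRel

variable {Atom : Type u} {V : Set Atom}

theorem of_succ : ∀ {n : ℕ} {K1 K2 : KStruct Atom}, BRel V (n + 1) K1 K2 → BRel V n K1 K2
  | 0, _, _, h => h.1
  | _ + 1, _, _, ⟨hL, hforth, hback⟩ =>
    ⟨hL, fun t1 ht1 => (hforth t1 ht1).imp fun _ ⟨ht2, hb⟩ => ⟨ht2, of_succ hb⟩,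
      fun t2 ht2 => (hback t2 ht2).imp fun _ ⟨ht1, hb⟩ => ⟨ht1, of_succ hb⟩⟩

theorem mono {m n : ℕ} {K1 K2 : KStruct Atom} (hmn : m ≤ n) (h : BRel V n K1 K2) :
    BRel V m K1 K2 := by
  induction hmn with
  | refl => exact h
  | step _ ih => exact ih h.of_succ

theorem symm : ∀ {n : ℕ} {K1 K2 : KStruct Atom}, BRel V n K1 K2 → BRel V n K2 K1
  | 0, _, _, h => Eq.symm h
  | _ + 1, _, _, ⟨hL, hforth, hback⟩ =>
    ⟨hL.symm, fun t2 ht2 => (hback t2 ht2).imp fun _ ⟨ht1, hb⟩ => ⟨ht1, symm hb⟩,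
      fun t1 ht1 => (hforth t1 ht1).imp fun _ ⟨ht2, hb⟩ => ⟨ht2, symm hb⟩⟩

end BRel

namespace VBisim

variable {Atom : Type u} {V : Set Atom} {M1 M2 : Kripke Atom}

theorem symm {K1 K2 : KStruct Atom} (h : VBisim V K1 K2) : VBisim V K2 K1 :=
  fun n => (h n).symm

theorem label_sdiff_eq {s1 : M1.State} {s2 : M2.State} (h : VBisim V ⟨M1, s1⟩ ⟨M2, s2⟩) :
    M1.L s1 \ V = M2.L s2 \ V :=
  h 0

/-- Each `B_{n+1}` yields a successor of `s2` matching `t1` up to `B_n`; as `M2` is finite, one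
successor does so for infinitely many `n`, hence, by monotonicity, for all `n`. -/
theorem forth {s1 t1 : M1.State} {s2 : M2.State} (h : VBisim V ⟨M1, s1⟩ ⟨M2, s2⟩)
    (ht1 : M1.R s1 t1) : ∃ t2, M2.R s2 t2 ∧ VBisim V ⟨M1, t1⟩ ⟨M2, t2⟩ := by
  choose f hfR hfB using fun n => (h (n + 1)).2.1 t1 ht1
  obtain ⟨t2, hinf⟩ := Finite.exists_infinite_fiber f
  have hfreq : ∀ m, ∃ n, f n = t2 ∧ m < n := (Set.infinite_coe_iff.mp hinf).exists_gt
  obtain ⟨n0, hn0, -⟩ := hfreq 0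
  refine ⟨t2, hn0 ▸ hfR n0, fun m => ?_⟩
  obtain ⟨n, hn, hmn⟩ := hfreq m
  exact hn ▸ (hfB n).mono hmn.le

theorem exists_path {π : ℕ → M1.State} (hπ : ∀ n, M1.R (π n) (π (n + 1))) {s2 : M2.State}
    (h : VBisim V ⟨M1, π 0⟩ ⟨M2, s2⟩) :
    ∃ π' : ℕ → M2.State, π' 0 = s2 ∧ (∀ n, M2.R (π' n) (π' (n + 1))) ∧
      ∀ n, VBisim V ⟨M1, π n⟩ ⟨M2, π' n⟩ := by
  have := M2.stateNonempty
  choose! next hnextR hnextB using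
    fun (t1 t1' : M1.State) (t2 : M2.State) (hb : VBisim V ⟨M1, t1⟩ ⟨M2, t2⟩) (ht : M1.R t1 t1') =>
      hb.forth ht
  let π' : ℕ → M2.State := fun n => Nat.rec s2 (fun k t => next (π k) (π (k + 1)) t) n
  have hB : ∀ n, VBisim V ⟨M1, π n⟩ ⟨M2, π' n⟩ := by
    intro n
    induction n with
    | zero => exact h
    | succ k ih => exact hnextB _ _ _ ih (hπ k)
  exact ⟨π', rfl, fun n => hnextR _ _ _ (hB n) (hπ n), hB⟩

end VBisim

section Satisfaction

variable {Atom : Type u}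

/-- Proving only the implication suffices: the induction hypothesis is then available for the
swapped pair, which handles negation. -/
theorem sat_of_vbisim {V : Set Atom} (φ : CTL Atom) (hφ : Disjoint (CTL.vars φ) V) :
    ∀ {M1 M2 : Kripke Atom} {s1 : M1.State} {s2 : M2.State},
      VBisim V ⟨M1, s1⟩ ⟨M2, s2⟩ → Sat M1 φ s1 → Sat M2 φ s2 := by
  induction φ with
  | bot => exact fun _ h => h
  | top => exact fun _ h => h
  | atom p =>
    intro _ _ _ _ hb hp
    have hpV : p ∉ V := Set.disjoint_singleton_left.mp hφ
    exact ((Set.ext_iff.mp hb.label_sdiff_eq p).mp ⟨hp, hpV⟩).1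
  | neg φ ih => exact fun hb hs hs' => hs (ih hφ hb.symm hs')
  | or φ ψ ihφ ihψ =>
    rw [CTL.vars, Set.disjoint_union_left] at hφ
    exact fun hb => Or.imp (ihφ hφ.1 hb) (ihψ hφ.2 hb)
  | EX φ ih =>
    rintro _ _ _ _ hb ⟨t1, ht1, hs⟩
    obtain ⟨t2, ht2, hb'⟩ := hb.forth ht1
    exact ⟨t2, ht2, ih hφ hb' hs⟩
  | EG φ ih =>
    rintro _ _ _ _ hb ⟨π, rfl, hπ, hs⟩
    obtain ⟨π', h0, hπ', hb'⟩ := hb.exists_path hπ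
    exact ⟨π', h0, hπ', fun n => ih hφ (hb' n) (hs n)⟩
  | EU φ ψ ihφ ihψ =>
    rw [CTL.vars, Set.disjoint_union_left] at hφ
    rintro _ _ _ _ hb ⟨π, rfl, hπ, i, hi, hj⟩
    obtain ⟨π', h0, hπ', hb'⟩ := hb.exists_path hπ
    exact ⟨π', h0, hπ', i, ihψ hφ.2 (hb' i) hi, fun j hji => ihφ hφ.1 (hb' j) (hj j hji)⟩

theorem sat_iff_of_vbisim {V : Set Atom} {φ : CTL Atom} (hφ : Disjoint (CTL.vars φ) V)
    {M1 M2 : Kripke Atom} {s1 : M1.State} {s2 : M2.State} (hb : VBisim V ⟨M1, s1⟩ ⟨M2, s2⟩) :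
    Sat M1 φ s1 ↔ Sat M2 φ s2 :=
  ⟨sat_of_vbisim φ hφ hb, sat_of_vbisim φ hφ hb.symm⟩

theorem sat_and {M : Kripke Atom} {φ ψ : CTL Atom} {s : M.State} :
    Sat M (φ.and ψ) s ↔ Sat M φ s ∧ Sat M ψ s := by
  simp only [CTL.and, Sat, not_or, not_not]

theorem sat_iff {M : Kripke Atom} {φ ψ : CTL Atom} {s : M.State} :
    Sat M (φ.iff ψ) s ↔ (Sat M φ s ↔ Sat M ψ s) := by
  simp only [CTL.iff, CTL.imp, sat_and, Sat]
  tauto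

end Satisfaction

section SetAtom

variable {Atom : Type u}

def Kripke.setAtom (M : Kripke Atom) (q : Atom) (P : M.State → Prop) : Kripke Atom :=
  { M with L := fun s => M.L s \ {q} ∪ {p | p = q ∧ P s} }

theorem Kripke.mem_setAtom_self (M : Kripke Atom) (q : Atom) (P : M.State → Prop)
    (s : M.State) : q ∈ (M.setAtom q P).L s ↔ P s := by
  simp [Kripke.setAtom]

theorem Kripke.vbisim_setAtom (M : Kripke Atom) (q : Atom) (P : M.State → Prop)
    (s : M.State) : VBisim {q} ⟨M.setAtom q P, s⟩ ⟨M, s⟩ := by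
  have hL : ∀ s, (M.setAtom q P).L s \ {q} = M.L s \ {q} := fun s => by
    ext p
    by_cases hp : p = q <;> simp [Kripke.setAtom, hp]
  intro n
  induction n generalizing s with
  | zero => exact hL s
  | succ n ih => exact ⟨hL s, fun t ht => ⟨t, ht, ih t⟩, fun t ht => ⟨t, ht, ih t⟩⟩

def InitKripke.setAtom (M : InitKripke Atom) (q : Atom) (P : M.State → Prop) :
    InitKripke Atom :=
  { M.toKripke.setAtom q P with s0 := M.s0, initial := M.initial }

end SetAtom

theorem forget_def_atom_general {Atom : Type u} (φ α : CTL Atom) (q : Atom)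
    (hq : q ∉ CTL.vars φ ∪ CTL.vars α) (ψ : CTL Atom)
    (h : IsForget (φ.and ((CTL.atom q).iff α)) {q} ψ) :
    CTLEquiv ψ φ := by
  rw [Set.mem_union, not_or] at hq
  have hφ : Disjoint (CTL.vars φ) {q} := Set.disjoint_singleton_right.mpr hq.1
  have hα : Disjoint (CTL.vars α) {q} := Set.disjoint_singleton_right.mpr hq.2
  rw [CTLEquiv, h.2]
  ext K
  constructor
  · rintro ⟨K', hK', hb⟩
    exact (sat_iff_of_vbisim hφ hb).mp (sat_and.mp hK').1
  · intro hK
    let K' := K.setAtom q (Sat K.toKripke α)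
    have hb : VBisim {q} K'.toKS K.toKS := K.toKripke.vbisim_setAtom q _ K.s0
    refine ⟨K', sat_and.mpr ⟨(sat_iff_of_vbisim hφ hb).mpr hK, sat_iff.mpr ?_⟩, hb⟩
    exact (K.toKripke.mem_setAtom_self q _ K.s0).trans (sat_iff_of_vbisim hα hb).symm

/-- if `q ∉ Var(φ) ∪ Var(α)` and `ψ` is a result of forgetting `{q}` from
`φ ∧ (q ↔ α)`, then `ψ ≡ φ`. -/
theorem forget_def_atom {Atom : Type u} [Finite Atom] (φ α : CTL Atom) (q : Atom)
    (hq : q ∉ CTL.vars φ ∪ CTL.vars α) (ψ : CTL Atom)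
    (h : IsForget (φ.and ((CTL.atom q).iff α)) {q} ψ) :
    CTLEquiv ψ φ :=
  forget_def_atom_general φ α q hq ψ h
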